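/- (Approximation Step 1.) Suppose (ϖ,ν) ∈ ℳ(𝒳×𝒳)×ℳ(𝒳×𝒳*) is sub-consistent. Then there exists a sequence (ϖ̂_n, ν̂_n) of pairs such that (i) each (ϖ̂_n, ν̂_n) is consistent, and (ii) (ϖ̂_n, ν̂_n) → (ϖ,ν) in the weak topology as n→∞. -/

import Mathlib

open scoped ENNReal NNReal Classical
open Filter

namespace GWLD

/-! ### The space `𝒳* = ⋃ₙ {n} × 𝒳ⁿ` of offspring configurations -/

/-- `𝒳* = ⋃ₙ {n} × 𝒳ⁿ`, with the discrete topology (it is a countable type). -/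
abbrev XStar (𝒳 : Type) : Type := Σ n : ℕ, Fin n → 𝒳

/-- the multiplicity `m(b,c)` of the symbol `b` in `c = (n, a₁, …, aₙ)`. -/
noncomputable def mult {𝒳 : Type} (b : 𝒳) (c : XStar 𝒳) : ℕ :=
  (Finset.univ.filter fun i : Fin c.1 => c.2 i = b).card

/-! ### Finite rooted planar typed trees -/

/-- A finite rooted planar tree, each vertex carrying a type from `𝒳`. -/
inductive TypedTree (𝒳 : Type) where
  | node : 𝒳 → List (TypedTree 𝒳) → TypedTree 𝒳

namespace TypedTree

variable {𝒳 : Type}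

/-- the type of the root. -/
def rootType : TypedTree 𝒳 → 𝒳
  | node a _ => a

mutual
  /-- the number `|T|` of vertices of the tree. -/
  def size : TypedTree 𝒳 → ℕ
    | node _ ts => 1 + sizeList ts
  def sizeList : List (TypedTree 𝒳) → ℕ
    | [] => 0
    | t :: ts => size t + sizeList ts
end

/-- the element of `𝒳*` recording the number and types of the roots of a list of trees;
`spec ts = C(v)` when `ts` is the list of subtrees hanging off the vertex `v`. -/
def spec (ts : List (TypedTree 𝒳)) : XStar 𝒳 :=
  ⟨ts.length, fun i => rootType (ts.get i)⟩

mutual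
  /-- `offCount t (a,c) = #{v ∈ V : (X(v), C(v)) = (a,c)}`. -/
  noncomputable def offCount : TypedTree 𝒳 → 𝒳 × XStar 𝒳 → ℕ
    | node a ts, p => (if p = (a, spec ts) then 1 else 0) + offCountList ts p
  noncomputable def offCountList : List (TypedTree 𝒳) → 𝒳 × XStar 𝒳 → ℕ
    | [], _ => 0
    | t :: ts, p => offCount t p + offCountList ts p
end

mutual
  /-- `pairCount t (a,b) = #{e ∈ E : (X(e₁), X(e₂)) = (a,b)}`. -/
  noncomputable def pairCount : TypedTree 𝒳 → 𝒳 × 𝒳 → ℕ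
    | node a ts, p =>
        (ts.map fun s => if p = (a, rootType s) then 1 else 0).sum + pairCountList ts p
  noncomputable def pairCountList : List (TypedTree 𝒳) → 𝒳 × 𝒳 → ℕ
    | [], _ => 0
    | t :: ts, p => pairCount t p + pairCountList ts p
end

mutual
  /-- `∏_{v ∈ V} ℚ{C(v) | X(v)}`. -/
  noncomputable def treeWeight (Q : 𝒳 → XStar 𝒳 → ℝ) : TypedTree 𝒳 → ℝ
    | node a ts => Q a (spec ts) * treeWeightList Q ts
  noncomputable def treeWeightList (Q : 𝒳 → XStar 𝒳 → ℝ) : List (TypedTree 𝒳) → ℝ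
    | [] => 1
    | t :: ts => treeWeight Q t * treeWeightList Q ts
end

end TypedTree

open TypedTree

variable {𝒳 : Type}

/-! ### Empirical measures -/

/-- the empirical offspring measure `M_X`. -/
noncomputable def MX (t : TypedTree 𝒳) : 𝒳 × XStar 𝒳 → ℝ :=
  fun p => (offCount t p : ℝ) / (size t : ℝ)

/-- the empirical pair measure `L̃_X` (normalised by the number of vertices). -/
noncomputable def LtX (t : TypedTree 𝒳) : 𝒳 × 𝒳 → ℝ :=
  fun p => (pairCount t p : ℝ) / (size t : ℝ)

/-- the empirical pair measure `L_X` (normalised by the number `|T| - 1` of edges). -/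
noncomputable def LX (t : TypedTree 𝒳) : 𝒳 × 𝒳 → ℝ :=
  fun p => (pairCount t p : ℝ) / ((size t : ℝ) - 1)

/-! ### The law of a multitype Galton-Watson tree and conditioning on the total size -/

/-- the probability that the multitype Galton-Watson tree with initial law `μ` and
offspring kernel `Q` produces exactly the typed tree `t`. -/
noncomputable def gwLaw (μ : 𝒳 → ℝ) (Q : 𝒳 → XStar 𝒳 → ℝ) (t : TypedTree 𝒳) : ℝ :=
  μ (rootType t) * treeWeight Q t

/-- `P{|T| = n}`. -/
noncomputable def partSum (μ : 𝒳 → ℝ) (Q : 𝒳 → XStar 𝒳 → ℝ) (n : ℕ) : ℝ :=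
  ∑' t : TypedTree 𝒳, if size t = n then gwLaw μ Q t else 0

/-- `P{X ∈ A | |T| = n}`. -/
noncomputable def condProb (μ : 𝒳 → ℝ) (Q : 𝒳 → XStar 𝒳 → ℝ)
    (A : Set (TypedTree 𝒳)) (n : ℕ) : ℝ :=
  (∑' t : TypedTree 𝒳, if size t = n ∧ t ∈ A then gwLaw μ Q t else 0) / partSum μ Q n

/-- `n → ∞` along those `n` for which `P{|T| = n} > 0`. -/
noncomputable def condFilter (μ : 𝒳 → ℝ) (Q : 𝒳 → XStar 𝒳 → ℝ) : Filter ℕ :=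
  Filter.atTop ⊓ Filter.principal {n : ℕ | 0 < partSum μ Q n}

/-! ### Large deviation principles -/

/-- extended logarithm, `elog x = -∞` for `x ≤ 0`. -/
noncomputable def elog (x : ℝ) : EReal := if x ≤ 0 then (⊥ : EReal) else ((Real.log x : ℝ) : EReal)

/-- A family `P n` of (conditional) probabilities on a topological space `S` satisfies a
large deviation principle with speed `n`, along the filter `L`, with rate function `I`. -/
def HasLDP {S : Type*} [TopologicalSpace S] (P : ℕ → Set S → ℝ) (L : Filter ℕ)
    (I : S → ℝ≥0∞) : Prop :=
  (∀ F : Set S, IsClosed F →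
      Filter.limsup (fun n : ℕ => (((n : ℝ)⁻¹ : ℝ) : EReal) * elog (P n F)) L
        ≤ -(⨅ x ∈ F, (I x : EReal))) ∧
  (∀ G : Set S, IsOpen G →
      -(⨅ x ∈ G, (I x : EReal))
        ≤ Filter.liminf (fun n : ℕ => (((n : ℝ)⁻¹ : ℝ) : EReal) * elog (P n G)) L)

/-- a good rate function: lower semicontinuous with compact sublevel sets. -/
def IsGoodRate {S : Type*} [TopologicalSpace S] (I : S → ℝ≥0∞) : Prop :=
  LowerSemicontinuous I ∧ ∀ c : ℝ≥0∞, c ≠ ⊤ → IsCompact {x : S | I x ≤ c}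

/-! ### Relative entropy -/

/-- relative entropy `H(ν ‖ μ)` of two (probability) mass functions on a countable set,
written via `φ(x) = x log x - x + 1` so that all summands are nonnegative. -/
noncomputable def relEnt {α : Type*} (ν μ : α → ℝ) : ℝ≥0∞ :=
  if ∀ x, μ x = 0 → ν x = 0 then
    ∑' x, ENNReal.ofReal (ν x * Real.log (ν x / μ x) - ν x + μ x)
  else ⊤

/-! ### Probability vectors and offspring kernels -/

/-- a probability mass function. -/
def IsProbVec {α : Type*} (μ : α → ℝ) : Prop := (∀ a, 0 ≤ μ a) ∧ HasSum μ 1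

/-- an offspring transition kernel from `𝒳` to `𝒳*`. -/
def IsKernel (Q : 𝒳 → XStar 𝒳 → ℝ) : Prop :=
  (∀ a c, 0 ≤ Q a c) ∧ ∀ a, HasSum (Q a) 1

/-- the offspring numbers have finite second moment under `Q{·|a}` for every `a`. -/
def FiniteSecondMoment (Q : 𝒳 → XStar 𝒳 → ℝ) : Prop :=
  ∀ a, Summable fun c : XStar 𝒳 => ((c.1 : ℝ)) ^ 2 * Q a c

/-! ### The mean matrix, weak irreducibility and criticality -/

/-- the mean matrix `A(a,b) = Σ_c ℚ{c|b} m(a,c)`, valued in `[0,∞]`. -/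
noncomputable def AmatE [Fintype 𝒳] (Q : 𝒳 → XStar 𝒳 → ℝ) : Matrix 𝒳 𝒳 ℝ≥0∞ :=
  Matrix.of fun a b => ∑' c : XStar 𝒳, (mult a c : ℝ≥0∞) * ENNReal.ofReal (Q b c)

/-- `A*(a,b) = Σ_{k ≥ 1} A^k(a,b) ∈ [0,∞]`. -/
noncomputable def Astar [Fintype 𝒳] [DecidableEq 𝒳] (Q : 𝒳 → XStar 𝒳 → ℝ) (a b : 𝒳) : ℝ≥0∞ :=
  ∑' k : ℕ, (AmatE Q ^ (k + 1)) a b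

/-- the multitype Galton-Watson tree with offspring kernel `Q` is weakly irreducible:
`𝒳` splits into recurrent and transient states as prescribed, and the number of
transient offspring is uniformly bounded under `Q`. -/
def WeaklyIrreducibleGW [Fintype 𝒳] [DecidableEq 𝒳] (Q : 𝒳 → XStar 𝒳 → ℝ) : Prop :=
  ∃ Xr Xt : Set 𝒳, Xr.Nonempty ∧ Disjoint Xr Xt ∧ Xr ∪ Xt = Set.univ ∧
    (∀ a b, b ∈ Xr → 0 < Astar Q a b) ∧
    (∀ a b, b ∈ Xt → (a = b ∨ a ∈ Xr) → Astar Q a b = 0) ∧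
    ∃ C : ℕ, ∀ a c, Q a c ≠ 0 → (∑ b : 𝒳, if b ∈ Xt then mult b c else 0) ≤ C

/-- the mean matrix as a real matrix (meaningful when the entries are finite). -/
noncomputable def Amat [Fintype 𝒳] (Q : 𝒳 → XStar 𝒳 → ℝ) : Matrix 𝒳 𝒳 ℝ :=
  Matrix.of fun a b => ∑' c : XStar 𝒳, (mult a c : ℝ) * Q b c

/-- `r` is the Perron-Frobenius eigenvalue of the nonnegative matrix `M` : it is an
eigenvalue with a nonnegative eigenvector dominating the modulus of every eigenvalue. -/
def IsPerronRoot [Fintype 𝒳] [DecidableEq 𝒳] (M : Matrix 𝒳 𝒳 ℝ) (r : ℝ) : Prop :=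
  (∃ v : 𝒳 → ℝ, v ≠ 0 ∧ (∀ a, 0 ≤ v a) ∧ M.mulVec v = r • v) ∧
  ∀ z : ℂ, (M.map (algebraMap ℝ ℂ)).charpoly.IsRoot z → ‖z‖ ≤ r

/-- criticality: the Perron-Frobenius eigenvalue of the mean matrix is `1`. -/
def CriticalGW [Fintype 𝒳] [DecidableEq 𝒳] (Q : 𝒳 → XStar 𝒳 → ℝ) : Prop :=
  IsPerronRoot (Amat Q) 1

/-! ### Spaces of measures (weak topology = topology of pointwise convergence) -/

/-- `ℳ̃(𝒳×𝒳)`: finite (nonnegative) measures on `𝒳 × 𝒳`. -/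
def Mpair (𝒳 : Type) : Set ((𝒳 × 𝒳) → ℝ) := {ϖ | ∀ p, 0 ≤ ϖ p}

/-- `ℳ(𝒳×𝒳*)`: probability measures `ν` on `𝒳 × 𝒳*` with `∫ n dν < ∞`. -/
def Mstar (𝒳 : Type) : Set ((𝒳 × XStar 𝒳) → ℝ) :=
  {ν | (∀ p, 0 ≤ ν p) ∧ HasSum ν 1 ∧ Summable fun p : 𝒳 × XStar 𝒳 => (p.2.1 : ℝ) * ν p}

/-- `ℳ(𝒳×𝒳_k*)`: probability measures on `𝒳 × 𝒳*` carried by `𝒳 × 𝒳_k*`. -/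
def MstarK (𝒳 : Type) (k : ℕ) : Set ((𝒳 × XStar 𝒳) → ℝ) :=
  {ν | ν ∈ Mstar 𝒳 ∧ ∀ p : 𝒳 × XStar 𝒳, k < p.2.1 → ν p = 0}

/-- `ℳ(𝒳×𝒳)` as probability measures: the empirical pair measure lives here. -/
def Mprob2 (𝒳 : Type) [Fintype 𝒳] : Set ((𝒳 × 𝒳) → ℝ) :=
  {μ | (∀ p, 0 ≤ μ p) ∧ ∑ p : 𝒳 × 𝒳, μ p = 1}

/-- the `𝒳`-marginal `ν₁` of a measure on `𝒳 × 𝒳*`. -/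
noncomputable def nu1 (ν : (𝒳 × XStar 𝒳) → ℝ) : 𝒳 → ℝ := fun a => ∑' c : XStar 𝒳, ν (a, c)

/-- the second marginal `ϖ₂` of a measure on `𝒳 × 𝒳`. -/
noncomputable def pi2 [Fintype 𝒳] (ϖ : (𝒳 × 𝒳) → ℝ) : 𝒳 → ℝ := fun b => ∑ a : 𝒳, ϖ (a, b)

/-- `(ϖ, ν)` is sub-consistent: `ϖ(a,b) ≥ Σ_c m(b,c) ν(a,c)` for all `a, b`. -/
def SubConsistent (ϖ : (𝒳 × 𝒳) → ℝ) (ν : (𝒳 × XStar 𝒳) → ℝ) : Prop :=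
  ∀ a b : 𝒳, (∑' c : XStar 𝒳, (mult b c : ℝ) * ν (a, c)) ≤ ϖ (a, b)

/-- `(ϖ, ν)` is consistent: `ϖ(a,b) = Σ_c m(b,c) ν(a,c)` for all `a, b`. -/
def Consistent (ϖ : (𝒳 × 𝒳) → ℝ) (ν : (𝒳 × XStar 𝒳) → ℝ) : Prop :=
  ∀ a b : 𝒳, (∑' c : XStar 𝒳, (mult b c : ℝ) * ν (a, c)) = ϖ (a, b)

/-- the measure `ν₁ ⊗ ℚ (a,c) = ν₁(a) ℚ{c|a}` on `𝒳 × 𝒳*`. -/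
noncomputable def prodQ (ν1f : 𝒳 → ℝ) (Q : 𝒳 → XStar 𝒳 → ℝ) : (𝒳 × XStar 𝒳) → ℝ :=
  fun p => ν1f p.1 * Q p.1 p.2

/-! ### The rate functions -/

/-- the rate function `J` of Theorem 2.1. -/
noncomputable def Jrate [Fintype 𝒳] (Q : 𝒳 → XStar 𝒳 → ℝ)
    (ϖ : (𝒳 × 𝒳) → ℝ) (ν : (𝒳 × XStar 𝒳) → ℝ) : ℝ≥0∞ :=
  if SubConsistent ϖ ν ∧ pi2 ϖ = nu1 ν then relEnt ν (prodQ (nu1 ν) Q) else ⊤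

/-- the rate function `J_k` of Theorem 2.3 (consistency instead of sub-consistency). -/
noncomputable def JrateC [Fintype 𝒳] (Q : 𝒳 → XStar 𝒳 → ℝ)
    (ϖ : (𝒳 × 𝒳) → ℝ) (ν : (𝒳 × XStar 𝒳) → ℝ) : ℝ≥0∞ :=
  if Consistent ϖ ν ∧ pi2 ϖ = nu1 ν then relEnt ν (prodQ (nu1 ν) Q) else ⊤

/-- the rate function `K` of Corollary 2.2. -/
noncomputable def Krate (Q : 𝒳 → XStar 𝒳 → ℝ) (ν : (𝒳 × XStar 𝒳) → ℝ) : ℝ≥0∞ :=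
  if ∀ b : 𝒳, (∑' p : 𝒳 × XStar 𝒳, (mult b p.2 : ℝ) * ν p) ≤ nu1 ν b then
    relEnt ν (prodQ (nu1 ν) Q)
  else ⊤

/-- the rate function `J̃`, defined on sub-consistent pairs. -/
noncomputable def Jtilde [Fintype 𝒳] (Q : 𝒳 → XStar 𝒳 → ℝ)
    (ϖ : (𝒳 × 𝒳) → ℝ) (ν : (𝒳 × XStar 𝒳) → ℝ) : ℝ≥0∞ :=
  if pi2 ϖ = nu1 ν then relEnt ν (prodQ (nu1 ν) Q) else ⊤

/-! ### Events -/

/-- the event `{(L̃_X, M_X) ∈ F}` for `F` a set of pairs of measures. -/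
def evPairOff (F : Set (↥(Mpair 𝒳) × ↥(Mstar 𝒳))) : Set (TypedTree 𝒳) :=
  {t | ∃ x ∈ F, x.1.1 = LtX t ∧ x.2.1 = MX t}

/-- the event `{(L̃_X, M_X) ∈ F}` for `F` a set of pairs with second component in `ℳ(𝒳×𝒳_k*)`. -/
def evPairOffK (k : ℕ) (F : Set (↥(Mpair 𝒳) × ↥(MstarK 𝒳 k))) : Set (TypedTree 𝒳) :=
  {t | ∃ x ∈ F, x.1.1 = LtX t ∧ x.2.1 = MX t}

/-- the event `{M_X ∈ F}`. -/
def evOff (F : Set ↥(Mstar 𝒳)) : Set (TypedTree 𝒳) := {t | ∃ x ∈ F, x.1 = MX t}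

/-- the event `{L_X ∈ F}`. -/
def evPair [Fintype 𝒳] (F : Set ↥(Mprob2 𝒳)) : Set (TypedTree 𝒳) := {t | ∃ x ∈ F, x.1 = LX t}

/-- `ℳ_s`, the (closed) set of sub-consistent pairs, as a subspace. -/
def Msub (𝒳 : Type) : Set (↥(Mpair 𝒳) × ↥(Mstar 𝒳)) := {x | SubConsistent x.1.1 x.2.1}

/-- `ℳ_{c,k}`, the (closed) set of consistent pairs, as a subspace. -/
def MsubK (𝒳 : Type) (k : ℕ) : Set (↥(Mpair 𝒳) × ↥(MstarK 𝒳 k)) := {x | Consistent x.1.1 x.2.1}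

/-- the event `{(L̃_X, M_X) ∈ F}` for `F ⊆ ℳ_s`. -/
def evPairOffSub (F : Set ↥(Msub 𝒳)) : Set (TypedTree 𝒳) :=
  {t | ∃ x ∈ F, x.1.1.1 = LtX t ∧ x.1.2.1 = MX t}

/-- the event `{(L̃_X, M_X) ∈ F}` for `F ⊆ ℳ_{c,k}`. -/
def evPairOffSubK (k : ℕ) (F : Set ↥(MsubK 𝒳 k)) : Set (TypedTree 𝒳) :=
  {t | ∃ x ∈ F, x.1.1.1 = LtX t ∧ x.1.2.1 = MX t}

/-! ### Markov chains indexed by Galton-Watson trees -/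

/-- the offspring kernel of a Markov chain with transition kernel `Q` indexed by a
Galton-Watson tree with offspring law `p`: `ℚ{c|b} = p(n) ∏ᵢ Q{aᵢ|b}`. -/
noncomputable def mcKernel (p : ℕ → ℝ) (Q : 𝒳 → 𝒳 → ℝ) : 𝒳 → XStar 𝒳 → ℝ :=
  fun b c => p c.1 * ∏ i : Fin c.1, Q b (c.2 i)

/-- irreducibility of a Markovian transition kernel on `𝒳`. -/
def IrreducibleKernel [Fintype 𝒳] [DecidableEq 𝒳] (Q : 𝒳 → 𝒳 → ℝ) : Prop :=
  ∀ a b : 𝒳, ∃ n : ℕ, 0 < ((Matrix.of Q) ^ (n + 1)) a b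

/-- first marginal of a measure on `𝒳 × 𝒳`. -/
noncomputable def mu1m [Fintype 𝒳] (μ : (𝒳 × 𝒳) → ℝ) : 𝒳 → ℝ := fun a => ∑ b : 𝒳, μ (a, b)

/-- second marginal of a measure on `𝒳 × 𝒳`. -/
noncomputable def mu2m [Fintype 𝒳] (μ : (𝒳 × 𝒳) → ℝ) : 𝒳 → ℝ := fun b => ∑ a : 𝒳, μ (a, b)

/-- the Cramér transform `I_p(x) = sup_λ {λx - log Σₙ p(n) e^{λn}}` of an offspring law,
as an element of `[0,∞]` (the log-moment generating function being `+∞`,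
i.e. the bracket being `-∞`, where the series diverges). -/
noncomputable def Ip (p : ℕ → ℝ) (x : ℝ) : ℝ≥0∞ :=
  ⨆ lam : ℝ,
    if Summable (fun n : ℕ => p n * Real.exp (lam * n)) then
      ENNReal.ofReal (lam * x - Real.log (∑' n : ℕ, p n * Real.exp (lam * n)))
    else 0

/-- the log-moment generating function `Λ_p(λ)`, valued in `(-∞, ∞]`. -/
noncomputable def logMgf (p : ℕ → ℝ) (lam : ℝ) : EReal :=
  if Summable (fun n : ℕ => p n * Real.exp (lam * n)) then
    ((Real.log (∑' n : ℕ, p n * Real.exp (lam * n)) : ℝ) : EReal)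
  else ⊤

/-- the rate function `I` of Theorem 2.5. -/
noncomputable def Irate [Fintype 𝒳] (p : ℕ → ℝ) (Q : 𝒳 → 𝒳 → ℝ) (μ : (𝒳 × 𝒳) → ℝ) : ℝ≥0∞ :=
  if ∀ a : 𝒳, mu2m μ a = 0 → mu1m μ a = 0 then
    relEnt μ (fun q : 𝒳 × 𝒳 => mu1m μ q.1 * Q q.1 q.2)
      + ∑ a : 𝒳, ENNReal.ofReal (mu2m μ a) * Ip p (mu1m μ a / mu2m μ a)
  else ⊤

/-! ### The variational upper-bound functional `Ĵ` -/

/-- bounded functions on `𝒳 × 𝒳*`. -/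
def BddFun {α : Type*} (g : α → ℝ) : Prop := ∃ M : ℝ, ∀ x, |g x| ≤ M

/-- `U_g(a) = log Σ_c e^{g(a,c)} ℚ{c|a}`. -/
noncomputable def Ug (Q : 𝒳 → XStar 𝒳 → ℝ) (g : (𝒳 × XStar 𝒳) → ℝ) (a : 𝒳) : ℝ :=
  Real.log (∑' c : XStar 𝒳, Real.exp (g (a, c)) * Q a c)

/-- `Ĵ(ϖ,ν) = sup_{g bounded} { ∫ g dν - ∫ U_g(b) ϖ(da,db) }`. -/
noncomputable def Jhat [Fintype 𝒳] (Q : 𝒳 → XStar 𝒳 → ℝ)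
    (ϖ : (𝒳 × 𝒳) → ℝ) (ν : (𝒳 × XStar 𝒳) → ℝ) : ℝ≥0∞ :=
  ⨆ (g : (𝒳 × XStar 𝒳) → ℝ) (_ : BddFun g),
    ENNReal.ofReal ((∑' p : 𝒳 × XStar 𝒳, g p * ν p) - ∑ q : 𝒳 × 𝒳, Ug Q g q.2 * ϖ q)

/-! ### Truncation, conditional kernels, total variation -/

/-- `‖ν‖_k = ν(𝒳 × 𝒳_k*)`. -/
noncomputable def normK (k : ℕ) (ν : (𝒳 × XStar 𝒳) → ℝ) : ℝ :=
  ∑' p : 𝒳 × XStar 𝒳, if p.2.1 ≤ k then ν p else 0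

/-- `ν_k`, the normalised restriction of `ν` to `𝒳 × 𝒳_k*`. -/
noncomputable def restrictK (k : ℕ) (ν : (𝒳 × XStar 𝒳) → ℝ) : (𝒳 × XStar 𝒳) → ℝ :=
  fun p => if p.2.1 ≤ k then ν p / normK k ν else 0

/-- `ℚ{𝒳_k* | a}`. -/
noncomputable def QmassK (Q : 𝒳 → XStar 𝒳 → ℝ) (k : ℕ) (a : 𝒳) : ℝ :=
  ∑' c : XStar 𝒳, if c.1 ≤ k then Q a c else 0

/-- the conditional offspring kernel `ℚ_k{c|a} = ℚ{c|a} / ℚ{𝒳_k*|a}` on `𝒳_k*`. -/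
noncomputable def Qcond (Q : 𝒳 → XStar 𝒳 → ℝ) (k : ℕ) : 𝒳 → XStar 𝒳 → ℝ :=
  fun a c => if c.1 ≤ k then Q a c / QmassK Q k a else 0

/-- `ϖ_k(a,b) = Σ_{c ∈ 𝒳_k*} m(b,c) ν_k(a,c)`. -/
noncomputable def piK (k : ℕ) (ν : (𝒳 × XStar 𝒳) → ℝ) : (𝒳 × 𝒳) → ℝ :=
  fun q => ∑' c : XStar 𝒳, (mult q.2 c : ℝ) * restrictK k ν (q.1, c)

/-- the total variation metric `d(ν,ν̃) = (1/2) Σ |ν - ν̃|`. -/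
noncomputable def tvDist {α : Type*} (ν ν' : α → ℝ) : ℝ := (1 / 2) * ∑' x, |ν x - ν' x|

/-- the pairing `⟨f, ν⟩ = Σ f dν`, valued in `[-∞,∞]`
(defined as the difference of the positive and negative parts). -/
noncomputable def pairE {α : Type*} (f ν : α → ℝ) : EReal :=
  ((∑' x, ENNReal.ofReal (f x * ν x) : ℝ≥0∞) : EReal)
    - ((∑' x, ENNReal.ofReal (-(f x * ν x)) : ℝ≥0∞) : EReal)

/-- `f^{(0,q]} = 1_{ν₁⊗ℚ ≥ ν > 0} log (ν / ν₁⊗ℚ)`. -/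
noncomputable def f0q (Q : 𝒳 → XStar 𝒳 → ℝ) (ν : (𝒳 × XStar 𝒳) → ℝ) : (𝒳 × XStar 𝒳) → ℝ :=
  fun p => if 0 < ν p ∧ ν p ≤ prodQ (nu1 ν) Q p then Real.log (ν p / prodQ (nu1 ν) Q p) else 0

/-- `f^{(q,1]} = 1_{1 ≥ ν > ν₁⊗ℚ} log (ν / ν₁⊗ℚ)`. -/
noncomputable def fq1 (Q : 𝒳 → XStar 𝒳 → ℝ) (ν : (𝒳 × XStar 𝒳) → ℝ) : (𝒳 × XStar 𝒳) → ℝ :=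
  fun p => if prodQ (nu1 ν) Q p < ν p ∧ ν p ≤ 1 then Real.log (ν p / prodQ (nu1 ν) Q p) else 0

/-- `f_k = 1_{ν_k > 0} log (ν_k / (ν_k)₁⊗ℚ_k)`. -/
noncomputable def fres (Q : 𝒳 → XStar 𝒳 → ℝ) (k : ℕ) (ν : (𝒳 × XStar 𝒳) → ℝ) :
    (𝒳 × XStar 𝒳) → ℝ :=
  fun p => if 0 < restrictK k ν p then
    Real.log (restrictK k ν p / prodQ (nu1 (restrictK k ν)) (Qcond Q k) p) else 0

/-! ### Product laws on `𝒳*` and on `𝒳ⁿ` -/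

/-- the offspring law `q(c) = p(n) ∏ᵢ q̂(aᵢ)` on `𝒳*`. -/
noncomputable def qProd (p : ℕ → ℝ) (qhat : 𝒳 → ℝ) : XStar 𝒳 → ℝ :=
  fun c => p c.1 * ∏ i : Fin c.1, qhat (c.2 i)

/-- the product measure `q̂ⁿ` on `𝒳ⁿ`. -/
noncomputable def prodM (qhat : 𝒳 → ℝ) (n : ℕ) : (Fin n → 𝒳) → ℝ := fun y => ∏ i, qhat (y i)

/-- the `i`-th marginal `v_{n,i}` of a measure on `𝒳ⁿ`. -/
noncomputable def marginal [Fintype 𝒳] {n : ℕ} (v : (Fin n → 𝒳) → ℝ) (i : Fin n) : 𝒳 → ℝ :=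
  fun b => ∑ y : Fin n → 𝒳, if y i = b then v y else 0

/-- the tilted law `s_λ(n) = p(n) e^{λn - Λ_p(λ)}`. -/
noncomputable def tilted (p : ℕ → ℝ) (lam : ℝ) : ℕ → ℝ :=
  fun n => p n * Real.exp (lam * n - Real.log (∑' m : ℕ, p m * Real.exp (lam * m)))

/-- `n × M_X[N > B]`: the number of vertices with more than `B` children. -/
noncomputable def bigCount (t : TypedTree 𝒳) (B : ℕ) : ℝ :=
  ∑' p : 𝒳 × XStar 𝒳, if B < p.2.1 then (TypedTree.offCount t p : ℝ) else 0

/-! The deficit `d = ϖ - inducedPair ν` is nonnegative by sub-consistency. Mix `ν`, with weight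
`θ = 1/(n+1)`, with the uniform law of `(a, cₙ(a))`, where the offspring configuration `cₙ(a)`
has `⌈N d(a,b)⌉` children of type `b` and `N = (n+1)|𝒳|`. Pairing the mixture with its own
induced pair measure gives a consistent pair, and that measure is
`(1 - θ) inducedPair ν + ⌈N d⌉ / N → inducedPair ν + d = ϖ`, while the mixture tends to `ν`
since `θ → 0`. -/

theorem mult_le_length (b : 𝒳) (c : XStar 𝒳) : mult b c ≤ c.1 :=
  (Finset.card_filter_le _ _).trans_eq (Finset.card_fin _)

theorem mult_ofList (L : List 𝒳) (b : 𝒳) : mult b ⟨L.length, L.get⟩ = L.count b :=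
  Fin.card_filter_univ_eq_vector_get_eq_count b ⟨L, rfl⟩

theorem exists_mult_eq [Fintype 𝒳] (k : 𝒳 → ℕ) : ∃ c : XStar 𝒳, ∀ b, mult b c = k b := by
  let m : Multiset 𝒳 := ∑ a, Multiset.replicate (k a) a
  refine ⟨⟨m.toList.length, m.toList.get⟩, fun b => ?_⟩
  rw [mult_ofList, ← Multiset.coe_count, Multiset.coe_toList, Multiset.count_sum']
  simp [Multiset.count_replicate]

noncomputable def inducedPair (ν : (𝒳 × XStar 𝒳) → ℝ) : (𝒳 × 𝒳) → ℝ :=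
  fun q => ∑' c : XStar 𝒳, (mult q.2 c : ℝ) * ν (q.1, c)

theorem consistent_inducedPair (ν : (𝒳 × XStar 𝒳) → ℝ) : Consistent (inducedPair ν) ν :=
  fun _ _ => rfl

theorem inducedPair_mem_Mpair {ν : (𝒳 × XStar 𝒳) → ℝ} (hν : ∀ p, 0 ≤ ν p) :
    inducedPair ν ∈ Mpair 𝒳 :=
  fun _ => tsum_nonneg fun _ => mul_nonneg (Nat.cast_nonneg _) (hν _)

theorem summable_mult_mul {ν : (𝒳 × XStar 𝒳) → ℝ} (hν : ν ∈ Mstar 𝒳) (a b : 𝒳) :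
    Summable fun c : XStar 𝒳 => (mult b c : ℝ) * ν (a, c) := by
  obtain ⟨hν0, -, hνn⟩ := hν
  have hrow := hνn.comp_injective (Prod.mk_right_injective a)
  exact hrow.of_nonneg_of_le (fun c => mul_nonneg (Nat.cast_nonneg _) (hν0 _))
    fun c => mul_le_mul_of_nonneg_right (by exact_mod_cast mult_le_length b c) (hν0 _)

theorem inducedPair_smul_add_smul {ν μ : (𝒳 × XStar 𝒳) → ℝ} (hν : ν ∈ Mstar 𝒳)
    (hμ : μ ∈ Mstar 𝒳) (s t : ℝ) :
    inducedPair (s • ν + t • μ) = s • inducedPair ν + t • inducedPair μ := by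
  funext ⟨a, b⟩
  simp only [inducedPair, Pi.add_apply, Pi.smul_apply, smul_eq_mul, mul_add, mul_left_comm _ s,
    mul_left_comm _ t, ← tsum_mul_left]
  exact ((summable_mult_mul hν a b).mul_left s).tsum_add ((summable_mult_mul hμ a b).mul_left t)

theorem convex_Mstar : Convex ℝ (Mstar 𝒳) := by
  rintro ν ⟨hν0, hν1, hνn⟩ μ ⟨hμ0, hμ1, hμn⟩ s t hs ht hst
  refine ⟨fun p => add_nonneg (mul_nonneg hs (hν0 p)) (mul_nonneg ht (hμ0 p)), ?_, ?_⟩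
  · show HasSum (fun p => s * ν p + t * μ p) 1
    simpa only [hst, mul_one] using (hν1.mul_left s).add (hμ1.mul_left t)
  · refine ((hνn.mul_left s).add (hμn.mul_left t)).congr fun p => ?_
    simp only [Pi.add_apply, Pi.smul_apply, smul_eq_mul]
    ring

theorem abs_le_one_of_mem_Mstar {ν : (𝒳 × XStar 𝒳) → ℝ} (hν : ν ∈ Mstar 𝒳)
    (p : 𝒳 × XStar 𝒳) : |ν p| ≤ 1 := by
  rw [abs_of_nonneg (hν.1 p)]
  exact le_hasSum hν.2.1 p fun q _ => hν.1 q

theorem hasSum_of_support_subset_graph (C : 𝒳 → XStar 𝒳) {f : (𝒳 × XStar 𝒳) → ℝ} {s : ℝ}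
    (hf : ∀ p, p.2 ≠ C p.1 → f p = 0) (h : HasSum (fun a => f (a, C a)) s) : HasSum f s := by
  have hinj : Function.Injective fun a => (a, C a) := fun _ _ h => congrArg Prod.fst h
  exact (hinj.hasSum_iff fun p hp => hf p fun hpC => hp ⟨p.1, Prod.ext rfl hpC.symm⟩).1 h

noncomputable def graphUniform [Fintype 𝒳] (C : 𝒳 → XStar 𝒳) : (𝒳 × XStar 𝒳) → ℝ :=
  fun p => if p.2 = C p.1 then (Fintype.card 𝒳 : ℝ)⁻¹ else 0

section graphUniform

variable [Fintype 𝒳] (C : 𝒳 → XStar 𝒳)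

theorem graphUniform_mem_Mstar [Nonempty 𝒳] : graphUniform C ∈ Mstar 𝒳 := by
  have hfst (p : 𝒳 × XStar 𝒳) (hp : p.2 ≠ C p.1) : graphUniform C p = 0 := if_neg hp
  refine ⟨fun p => ?_, hasSum_of_support_subset_graph C hfst ?_,
    (hasSum_of_support_subset_graph C (fun p hp => by rw [hfst p hp, mul_zero])
      (hasSum_fintype _)).summable⟩
  · unfold graphUniform
    split_ifs <;> positivity
  · simp only [graphUniform, ↓reduceIte]
    convert hasSum_fintype _
    rw [Finset.sum_const, Finset.card_univ, nsmul_eq_mul, mul_inv_cancel₀]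
    exact Nat.cast_ne_zero.2 Fintype.card_ne_zero

theorem inducedPair_graphUniform (a b : 𝒳) :
    inducedPair (graphUniform C) (a, b) = mult b (C a) / Fintype.card 𝒳 := by
  simp only [inducedPair, graphUniform, mul_ite, mul_zero, tsum_ite_eq, div_eq_mul_inv]

end graphUniform

theorem tendsto_sub_smul_add_smul {α : Type*} {ν : α → ℝ} {μ : ℕ → α → ℝ} {θ : ℕ → ℝ}
    (hθ : Tendsto θ atTop (nhds 0)) (hμ : ∀ n p, |μ n p| ≤ 1) :
    Tendsto (fun n => (1 - θ n) • ν + θ n • μ n) atTop (nhds ν) := by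
  rw [tendsto_pi_nhds]
  intro p
  have hsmall : Tendsto (fun n => θ n * μ n p) atTop (nhds 0) :=
    hθ.zero_mul_isBoundedUnder_le ⟨1, eventually_map.2 (Eventually.of_forall fun n => by
      simpa [Real.norm_eq_abs] using hμ n p)⟩
  simpa using (((tendsto_const_nhds (x := (1 : ℝ))).sub hθ).mul_const (ν p)).add hsmall

theorem tendsto_inducedPair_mix [Fintype 𝒳] [Nonempty 𝒳] {ν : (𝒳 × XStar 𝒳) → ℝ}
    (hν : ν ∈ Mstar 𝒳) {d : (𝒳 × 𝒳) → ℝ} (hd : 0 ≤ d) {C : ℕ → 𝒳 → XStar 𝒳}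
    (hC : ∀ n a b, mult b (C n a) = ⌈d (a, b) * (((n : ℝ) + 1) * Fintype.card 𝒳)⌉₊) :
    Tendsto (fun n : ℕ => inducedPair
        ((1 - 1 / ((n : ℝ) + 1)) • ν + (1 / ((n : ℝ) + 1)) • graphUniform (C n)))
      atTop (nhds (inducedPair ν + d)) := by
  have hN : Tendsto (fun n : ℕ => ((n : ℝ) + 1) * Fintype.card 𝒳) atTop atTop :=
    (tendsto_atTop_add_const_right _ 1 tendsto_natCast_atTop_atTop).atTop_mul_const
      (Nat.cast_pos.2 Fintype.card_pos)
  rw [tendsto_pi_nhds]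
  rintro ⟨a, b⟩
  have hw (n : ℕ) : inducedPair
      ((1 - 1 / ((n : ℝ) + 1)) • ν + (1 / ((n : ℝ) + 1)) • graphUniform (C n)) (a, b)
      = (1 - 1 / ((n : ℝ) + 1)) * inducedPair ν (a, b)
        + ⌈d (a, b) * (((n : ℝ) + 1) * Fintype.card 𝒳)⌉₊ / (((n : ℝ) + 1) * Fintype.card 𝒳) := by
    rw [inducedPair_smul_add_smul hν (graphUniform_mem_Mstar (C n))]
    simp only [Pi.add_apply, Pi.smul_apply, smul_eq_mul, inducedPair_graphUniform, hC]
    field_simp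
  have hlim := (((tendsto_const_nhds (x := (1 : ℝ))).sub
    tendsto_one_div_add_atTop_nhds_zero_nat).mul_const (inducedPair ν (a, b))).add
    ((tendsto_nat_ceil_mul_div_atTop (hd (a, b))).comp hN)
  simpa only [hw, Pi.add_apply, sub_zero, one_mul, Function.comp_apply] using hlim

/-- **Lemma 3.7** (Approximation Step 1). Every sub-consistent pair `(ϖ, ν)` is the
(weak) limit of a sequence of consistent pairs `(ϖ̂_n, ν̂_n)`. -/
theorem stmt11 {𝒳 : Type} [Fintype 𝒳] [Nonempty 𝒳]
    (ϖ : (𝒳 × 𝒳) → ℝ) (ν : (𝒳 × XStar 𝒳) → ℝ)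
    (hϖ : ϖ ∈ Mpair 𝒳) (hν : ν ∈ Mstar 𝒳) (hsub : SubConsistent ϖ ν) :
    ∃ (w : ℕ → (𝒳 × 𝒳) → ℝ) (v : ℕ → (𝒳 × XStar 𝒳) → ℝ),
      (∀ n, w n ∈ Mpair 𝒳 ∧ v n ∈ Mstar 𝒳 ∧ Consistent (w n) (v n)) ∧
      Filter.Tendsto w Filter.atTop (nhds ϖ) ∧
      Filter.Tendsto v Filter.atTop (nhds ν) := by
  have hd : 0 ≤ ϖ - inducedPair ν := fun q => sub_nonneg.2 (hsub q.1 q.2)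
  choose C hC using fun (n : ℕ) a => exists_mult_eq fun b =>
    ⌈(ϖ - inducedPair ν) (a, b) * (((n : ℝ) + 1) * Fintype.card 𝒳)⌉₊
  set v : ℕ → (𝒳 × XStar 𝒳) → ℝ :=
    fun n => (1 - 1 / ((n : ℝ) + 1)) • ν + (1 / ((n : ℝ) + 1)) • graphUniform (C n)
  have hv (n : ℕ) : v n ∈ Mstar 𝒳 := by
    refine convex_Mstar hν (graphUniform_mem_Mstar (C n)) ?_ (by positivity) (sub_add_cancel _ _)
    rw [sub_nonneg, div_le_one (by positivity)]
    linarith [n.cast_nonneg (α := ℝ)]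
  refine ⟨fun n => inducedPair (v n), v,
    fun n => ⟨inducedPair_mem_Mpair (hv n).1, hv n, consistent_inducedPair _⟩, ?_,
    tendsto_sub_smul_add_smul tendsto_one_div_add_atTop_nhds_zero_nat
      fun n => abs_le_one_of_mem_Mstar (graphUniform_mem_Mstar (C n))⟩
  simpa only [add_sub_cancel] using tendsto_inducedPair_mix hν hd hC

end GWLD
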